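/- arXiv:2008.11117 — 2 statements merged into one kernel-verified Lean document; each statement's English description precedes it below -/
import Mathlib

section
/- Let f : ℝⁿ → ℝ be differentiable, μ-strongly convex with L-Lipschitz gradient and minimizer x*. Let ε > 0 and α < (4εμ/(L²n))^{1/2}. If f(x) − f(x*) > ε, then ‖∇f(x)‖₂ > Lα√n/2. -/
/-! Strong monotonicity of the gradient gives `μ ‖x - x*‖ ≤ ‖∇f x‖`, and convexity gives the secant
bound `f x - f x* ≤ ‖∇f x‖ ‖x - x*‖`. Multiplying the two, `μ (f x - f x*) ≤ ‖∇f x‖²`, and this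
exceeds `μ ε`, which in turn is at least `(L α √n / 2)²` by the choice of `α`. -/

open scoped RealInnerProductSpace

section Gradient

variable {E : Type*} [NormedAddCommGroup E] [InnerProductSpace ℝ E] [CompleteSpace E] {f : E → ℝ}

theorem DifferentiableAt.hasDerivAt_comp_add_smul {x v : E} {t : ℝ}
    (hf : DifferentiableAt ℝ f (x + t • v)) :
    HasDerivAt (fun s : ℝ ↦ f (x + s • v)) ⟪gradient f (x + t • v), v⟫ t := by
  have hline : HasDerivAt (fun s : ℝ ↦ x + s • v) v t := by
    simpa using ((hasDerivAt_id t).smul_const v).const_add x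
  rw [inner_gradient_left]
  exact hf.hasFDerivAt.comp_hasDerivAt t hline

theorem IsLocalMin.gradient_eq_zero {x : E} (h : IsLocalMin f x) : gradient f x = 0 := by
  simp [gradient, h.fderiv_eq_zero]

theorem sub_le_inner_gradient_of_monotone (hf : Differentiable ℝ f)
    (hmono : ∀ x y, 0 ≤ ⟪gradient f x - gradient f y, x - y⟫) (x y : E) :
    f x - f y ≤ ⟪gradient f x, x - y⟫ := by
  set v := y - x
  have hderiv (t : ℝ) : HasDerivAt (fun s : ℝ ↦ f (x + s • v)) ⟪gradient f (x + t • v), v⟫ t :=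
    (hf _).hasDerivAt_comp_add_smul
  obtain ⟨c, ⟨hc, -⟩, hslope⟩ := exists_hasDerivAt_eq_slope _ _ one_pos
    (fun t _ ↦ (hderiv t).continuousAt.continuousWithinAt) (fun t _ ↦ hderiv t)
  have hmean : ⟪gradient f (x + c • v), v⟫ = f y - f x := by simpa [v] using hslope
  have hgrowth : 0 ≤ c * ⟪gradient f (x + c • v) - gradient f x, v⟫ := by
    simpa [real_inner_smul_right] using hmono (x + c • v) x
  have hinc : ⟪gradient f x, v⟫ ≤ ⟪gradient f (x + c • v), v⟫ := by
    rw [← sub_nonneg, ← inner_sub_left]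
    exact nonneg_of_mul_nonneg_right hgrowth hc
  have hvx : x - y = -v := by simp [v]
  rw [hvx, inner_neg_right]
  linarith

end Gradient

theorem mul_norm_sub_le_norm_sub_of_inner_ge {E : Type*} [NormedAddCommGroup E]
    [InnerProductSpace ℝ E] {T : E → E} {μ : ℝ}
    (hT : ∀ x y, μ * ‖x - y‖ ^ 2 ≤ ⟪T x - T y, x - y⟫) (x y : E) :
    μ * ‖x - y‖ ≤ ‖T x - T y‖ := by
  rcases (norm_nonneg (x - y)).eq_or_lt with hxy | hxy
  · rw [← hxy, mul_zero]
    exact norm_nonneg _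
  · refine le_of_mul_le_mul_right ?_ hxy
    calc μ * ‖x - y‖ * ‖x - y‖ = μ * ‖x - y‖ ^ 2 := by ring
      _ ≤ ⟪T x - T y, x - y⟫ := hT x y
      _ ≤ ‖T x - T y‖ * ‖x - y‖ := real_inner_le_norm _ _

/-- A Polyak–Łojasiewicz type inequality for strongly convex functions. -/
theorem mul_sub_le_norm_gradient_sq {E : Type*} [NormedAddCommGroup E]
    [InnerProductSpace ℝ E] [CompleteSpace E] {f : E → ℝ} {μ : ℝ} (hμ : 0 ≤ μ)
    (hf : Differentiable ℝ f)
    (hconv : ∀ x y, μ * ‖x - y‖ ^ 2 ≤ ⟪gradient f x - gradient f y, x - y⟫)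
    {xstar : E} (hmin : ∀ y, f xstar ≤ f y) (x : E) :
    μ * (f x - f xstar) ≤ ‖gradient f x‖ ^ 2 := by
  have hmono x y : 0 ≤ ⟪gradient f x - gradient f y, x - y⟫ :=
    (mul_nonneg hμ (sq_nonneg _)).trans (hconv x y)
  have hgap : f x - f xstar ≤ ‖gradient f x‖ * ‖x - xstar‖ :=
    (sub_le_inner_gradient_of_monotone hf hmono x xstar).trans (real_inner_le_norm _ _)
  have hdist : μ * ‖x - xstar‖ ≤ ‖gradient f x‖ := by
    simpa [IsLocalMin.gradient_eq_zero (Filter.Eventually.of_forall hmin)] using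
      mul_norm_sub_le_norm_sub_of_inner_ge hconv x xstar
  calc μ * (f x - f xstar) ≤ μ * (‖gradient f x‖ * ‖x - xstar‖) := by gcongr
    _ = ‖gradient f x‖ * (μ * ‖x - xstar‖) := by ring
    _ ≤ ‖gradient f x‖ ^ 2 := by rw [sq]; gcongr

theorem mul_sq_le_of_lt_sqrt_div {a b c : ℝ} (ha : 0 ≤ a) (hb : 0 ≤ b) (hc : 0 ≤ c)
    (h : a < √(c / b)) : b * a ^ 2 ≤ c := by
  have ha2 : a ^ 2 < c / b := (Real.lt_sqrt ha).mp h
  rcases hb.eq_or_lt with rfl | hb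
  · simpa using hc
  · calc b * a ^ 2 ≤ b * (c / b) := by gcongr
      _ = c := mul_div_cancel₀ c hb.ne'

theorem stmt_12_general (n : ℕ) (f : EuclideanSpace ℝ (Fin n) → ℝ) (μ L α ε : ℝ)
    (hμ : 0 < μ) (hα : 0 < α) (hε : 0 < ε)
    (hdiff : Differentiable ℝ f)
    (hconv : ∀ x y : EuclideanSpace ℝ (Fin n),
      ⟪gradient f x - gradient f y, x - y⟫ ≥ μ * ‖x - y‖ ^ 2)
    (xstar : EuclideanSpace ℝ (Fin n)) (hmin : ∀ y, f xstar ≤ f y)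
    (hαsmall : α < Real.sqrt (4 * ε * μ / (L ^ 2 * n)))
    (x : EuclideanSpace ℝ (Fin n)) (hx : f x - f xstar > ε) :
    ‖gradient f x‖ > L * α * Real.sqrt n / 2 := by
  have hα2 : L ^ 2 * n * α ^ 2 ≤ 4 * ε * μ :=
    mul_sq_le_of_lt_sqrt_div hα.le (by positivity) (by positivity) hαsmall
  have hPL := mul_sub_le_norm_gradient_sq hμ.le hdiff hconv hmin x
  refine lt_of_pow_lt_pow_left₀ 2 (norm_nonneg _) ?_
  calc (L * α * Real.sqrt n / 2) ^ 2 = L ^ 2 * n * α ^ 2 / 4 := by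
        rw [div_pow, mul_pow, mul_pow, Real.sq_sqrt n.cast_nonneg]; ring
    _ ≤ ε * μ := by linarith
    _ < μ * (f x - f xstar) := by rw [mul_comm]; exact mul_lt_mul_of_pos_left hx hμ
    _ ≤ ‖gradient f x‖ ^ 2 := hPL

theorem stmt_12 (n : ℕ) (hn : 1 ≤ n) (f : EuclideanSpace ℝ (Fin n) → ℝ) (μ L α ε : ℝ)
    (hμ : 0 < μ) (hL : 0 < L) (hα : 0 < α) (hε : 0 < ε)
    (hdiff : Differentiable ℝ f)
    (hconv : ∀ x y : EuclideanSpace ℝ (Fin n),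
      ⟪gradient f x - gradient f y, x - y⟫ ≥ μ * ‖x - y‖ ^ 2)
    (hlip : ∀ x y : EuclideanSpace ℝ (Fin n), ‖gradient f x - gradient f y‖ ≤ L * ‖x - y‖)
    (xstar : EuclideanSpace ℝ (Fin n)) (hmin : ∀ y, f xstar ≤ f y)
    (hαsmall : α < Real.sqrt (4 * ε * μ / (L ^ 2 * n)))
    (x : EuclideanSpace ℝ (Fin n)) (hx : f x - f xstar > ε) :
    ‖gradient f x‖ > L * α * Real.sqrt n / 2 :=
  stmt_12_general n f μ L α ε hμ hα hε hdiff hconv xstar hmin hαsmall x hx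
end

section
/- Let f : ℝⁿ → ℝ have L-Lipschitz gradient. If x satisfies (Lα/2)‖∇f(x)‖₁ < ‖∇f(x)‖₂², then with g = ∇f(x), ‖g‖_∞ ≤ η, and X = x − α Σᵢ sgn(gᵢ)Δᵢ eᶦ where Δᵢ are independent Bernoulli with P[Δᵢ=1] = |gᵢ|/η, one has E[f(X)] < f(x). -/
/-!
For every outcome `s` of the coin flips, the descent lemma for an `L`-smooth `f` gives
`f (X s) ≤ f x + ∑ⱼ (L α² sgn(gⱼ)² / 2 - α |gⱼ|) Δⱼ(s)`, an affine function of the `Δⱼ`.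
Taking expectations with `E Δⱼ = |gⱼ| / η` and `sgn(gⱼ)² |gⱼ| = |gⱼ|` yields
`E f(X) ≤ f x + (α / η) (L α / 2 ‖g‖₁ - ‖g‖₂²)`, and the bracket is negative by hypothesis.
-/

noncomputable def bernWeight {n : ℕ} (p : Fin n → ℝ) (s : Fin n → Bool) : ℝ :=
  ∏ i, if s i then p i else 1 - p i

noncomputable def bernExp {n : ℕ} (p : Fin n → ℝ) (h : (Fin n → Bool) → ℝ) : ℝ :=
  ∑ s : Fin n → Bool, bernWeight p s * h s

noncomputable def smgdStep {n : ℕ} (x : EuclideanSpace ℝ (Fin n)) (α : ℝ)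
    (g : Fin n → ℝ) (s : Fin n → Bool) : EuclideanSpace ℝ (Fin n) :=
  x - α • ∑ i, (Real.sign (g i) * (if s i then 1 else 0)) • EuclideanSpace.single i (1 : ℝ)

open scoped RealInnerProductSpace

theorem Real.sign_mul_self_eq_abs (r : ℝ) : Real.sign r * r = |r| := by
  rcases lt_trichotomy r 0 with h | rfl | h
  · rw [Real.sign_of_neg h, abs_of_neg h]; ring
  · simp
  · rw [Real.sign_of_pos h, abs_of_pos h]; ring

theorem Real.sign_sq_mul_abs (r : ℝ) : Real.sign r ^ 2 * |r| = |r| := by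
  rcases lt_trichotomy r 0 with h | rfl | h
  · rw [Real.sign_of_neg h]; ring
  · simp
  · rw [Real.sign_of_pos h]; ring

theorem le_add_inner_add_sq_of_gradient_lipschitz {E : Type*} [NormedAddCommGroup E]
    [InnerProductSpace ℝ E] [CompleteSpace E] {f : E → ℝ} {L : ℝ} (hf : Differentiable ℝ f)
    {x : E} (hlip : ∀ y, ‖gradient f y - gradient f x‖ ≤ L * ‖y - x‖) (y : E) :
    f y ≤ f x + ⟪gradient f x, y - x⟫ + L / 2 * ‖y - x‖ ^ 2 := by
  set v := y - x
  let φ : ℝ → ℝ := fun t => f (x + t • v) - t * ⟪gradient f x, v⟫ - L / 2 * t ^ 2 * ‖v‖ ^ 2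
  have hφ : ∀ t, HasDerivAt φ
      (⟪gradient f (x + t • v) - gradient f x, v⟫ - L * t * ‖v‖ ^ 2) t := by
    intro t
    have hline : HasDerivAt (fun t : ℝ => x + t • v) v t := by
      simpa using ((hasDerivAt_id t).smul_const v).const_add x
    have hcomp := (hf (x + t • v)).hasGradientAt.hasFDerivAt.comp_hasDerivAt t hline
    have h := (hcomp.sub ((hasDerivAt_id t).mul_const ⟪gradient f x, v⟫)).sub
      (((hasDerivAt_pow 2 t).const_mul (L / 2)).mul_const (‖v‖ ^ 2))
    refine h.congr_deriv ?_
    simp only [InnerProductSpace.toDual_apply_apply, inner_sub_left]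
    push_cast
    ring
  have hφ' : ∀ t ∈ interior (Set.Ici (0 : ℝ)),
      ⟪gradient f (x + t • v) - gradient f x, v⟫ - L * t * ‖v‖ ^ 2 ≤ 0 := by
    intro t ht
    rw [interior_Ici] at ht
    rw [sub_nonpos]
    calc ⟪gradient f (x + t • v) - gradient f x, v⟫
        ≤ ‖gradient f (x + t • v) - gradient f x‖ * ‖v‖ := real_inner_le_norm _ _
      _ ≤ L * ‖t • v‖ * ‖v‖ := by
          gcongr
          simpa using hlip (x + t • v)
      _ = L * t * ‖v‖ ^ 2 := by rw [norm_smul, Real.norm_of_nonneg ht.le]; ring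
  have hanti := antitoneOn_of_hasDerivWithinAt_nonpos (convex_Ici 0)
    (fun t _ => (hφ t).continuousAt.continuousWithinAt) (fun t _ => (hφ t).hasDerivWithinAt) hφ'
  have := hanti Set.self_mem_Ici (Set.mem_Ici.2 zero_le_one) zero_le_one
  simp only [φ, zero_smul, add_zero, one_smul, zero_mul, one_pow, one_mul, sub_zero] at this
  have hxy : x + v = y := add_sub_cancel x y
  rw [hxy] at this
  linarith

section Bernoulli

variable {n : ℕ} (p : Fin n → ℝ)

theorem bernWeight_nonneg (hp₀ : ∀ i, 0 ≤ p i) (hp₁ : ∀ i, p i ≤ 1) (s : Fin n → Bool) :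
    0 ≤ bernWeight p s :=
  Finset.prod_nonneg fun i _ => by
    cases s i
    · simpa using hp₁ i
    · simpa using hp₀ i

theorem sum_prod_bool {ι R : Type*} [Fintype ι] [DecidableEq ι] [CommSemiring R]
    (F : ι → Bool → R) :
    ∑ s : ι → Bool, ∏ i, F i (s i) = ∏ i, (F i true + F i false) := by
  simp only [← Fintype.sum_bool, Fintype.prod_sum]

theorem sum_bernWeight : ∑ s, bernWeight p s = 1 := by
  simp [bernWeight, sum_prod_bool fun i b => if b then p i else 1 - p i]

theorem bernExp_ite_apply (j : Fin n) :
    bernExp p (fun s => if s j then 1 else 0) = p j := by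
  -- the indicator of `s j` is absorbed into the `j`-th factor of the product weight
  have hprod : ∀ s : Fin n → Bool, bernWeight p s * (if s j then 1 else 0)
      = ∏ i, if s i then p i else if i = j then 0 else 1 - p i := by
    intro s
    by_cases hs : s j
    · rw [if_pos hs, mul_one]
      refine Finset.prod_congr rfl fun i _ => ?_
      by_cases hi : i = j <;> simp_all
    · rw [if_neg hs, mul_zero, eq_comm]
      exact Finset.prod_eq_zero (Finset.mem_univ j) (by simp [hs])
  have hfactor : ∀ i, p i + (if i = j then 0 else 1 - p i) = if i = j then p j else 1 := by
    intro i
    split_ifs with hi <;> simp [hi]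
  simp only [bernExp, hprod, sum_prod_bool fun i b => if b then p i else if i = j then 0 else 1 - p i,
    Bool.false_eq_true, if_true, if_false, hfactor, Finset.prod_ite_eq', Finset.mem_univ]

theorem bernExp_const_add_sum (A : ℝ) (b : Fin n → ℝ) :
    bernExp p (fun s => A + ∑ j, b j * if s j then 1 else 0) = A + ∑ j, b j * p j := by
  simp only [bernExp, mul_add, Finset.sum_add_distrib, ← Finset.sum_mul, sum_bernWeight, one_mul,
    Finset.mul_sum]
  rw [Finset.sum_comm]
  congr 1
  refine Finset.sum_congr rfl fun j _ => ?_
  simp only [mul_left_comm _ (b j), ← Finset.mul_sum]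
  rw [← bernExp, bernExp_ite_apply]

theorem bernExp_mono (hp₀ : ∀ i, 0 ≤ p i) (hp₁ : ∀ i, p i ≤ 1) {h₁ h₂ : (Fin n → Bool) → ℝ}
    (hle : ∀ s, h₁ s ≤ h₂ s) : bernExp p h₁ ≤ bernExp p h₂ :=
  Finset.sum_le_sum fun s _ => mul_le_mul_of_nonneg_left (hle s) (bernWeight_nonneg p hp₀ hp₁ s)

end Bernoulli

section Step

variable {n : ℕ} {f : EuclideanSpace ℝ (Fin n) → ℝ} {L : ℝ}

theorem smgdStep_sub_apply (x : EuclideanSpace ℝ (Fin n)) (α : ℝ) (g : Fin n → ℝ)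
    (s : Fin n → Bool) (j : Fin n) :
    (smgdStep x α g s - x) j = -(α * (Real.sign (g j) * if s j then 1 else 0)) := by
  simp only [smgdStep, sub_sub_cancel_left, PiLp.neg_apply, PiLp.smul_apply, WithLp.ofLp_sum,
    Finset.sum_apply, PiLp.single_apply, smul_eq_mul, mul_ite, mul_one, mul_zero,
    Finset.sum_ite_eq, Finset.mem_univ, if_true]

theorem apply_smgdStep_le (hf : Differentiable ℝ f)
    {x : EuclideanSpace ℝ (Fin n)} (hlip : ∀ y, ‖gradient f y - gradient f x‖ ≤ L * ‖y - x‖)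
    (α : ℝ) (s : Fin n → Bool) :
    f (smgdStep x α (fun i => gradient f x i) s) ≤ f x + ∑ j,
      (L / 2 * α ^ 2 * Real.sign (gradient f x j) ^ 2 - α * |gradient f x j|) *
        if s j then 1 else 0 := by
  calc f (smgdStep x α (fun i => gradient f x i) s)
      ≤ f x + ⟪gradient f x, smgdStep x α (fun i => gradient f x i) s - x⟫ +
          L / 2 * ‖smgdStep x α (fun i => gradient f x i) s - x‖ ^ 2 :=
        le_add_inner_add_sq_of_gradient_lipschitz hf hlip _
    _ = _ := by
      rw [PiLp.inner_apply, EuclideanSpace.real_norm_sq_eq, Finset.mul_sum, add_assoc,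
        ← Finset.sum_add_distrib]
      congr 1
      refine Finset.sum_congr rfl fun j _ => ?_
      have hsign := Real.sign_mul_self_eq_abs (gradient f x j)
      rw [smgdStep_sub_apply, real_inner_eq_re_inner]
      split_ifs
      · simp only [RCLike.inner_apply, conj_trivial, RCLike.re_to_real]
        linear_combination (-α) * hsign
      · simp

theorem bernExp_smgdStep_le (hf : Differentiable ℝ f)
    {x : EuclideanSpace ℝ (Fin n)} (hlip : ∀ y, ‖gradient f y - gradient f x‖ ≤ L * ‖y - x‖)
    (α : ℝ) {η : ℝ} (hη : 0 < η)
    (hg : ∀ i, |gradient f x i| ≤ η) :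
    bernExp (fun i => |gradient f x i| / η) (fun s => f (smgdStep x α (fun i => gradient f x i) s))
      ≤ f x + L * α ^ 2 / (2 * η) * ∑ i, |gradient f x i| - α / η * ‖gradient f x‖ ^ 2 := by
  have hp₀ : ∀ i, 0 ≤ |gradient f x i| / η := fun i => by positivity
  have hp₁ : ∀ i, |gradient f x i| / η ≤ 1 := fun i => (div_le_one hη).2 (hg i)
  refine (bernExp_mono _ hp₀ hp₁ (apply_smgdStep_le hf hlip α)).trans_eq ?_
  rw [bernExp_const_add_sum, EuclideanSpace.real_norm_sq_eq, Finset.mul_sum, Finset.mul_sum,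
    add_sub_assoc, ← Finset.sum_sub_distrib]
  congr 1
  refine Finset.sum_congr rfl fun j _ => ?_
  have hsign := Real.sign_sq_mul_abs (gradient f x j)
  have habs := sq_abs (gradient f x j)
  field_simp
  linear_combination (L * α ^ 2) * hsign - 2 * α * habs

end Step

theorem stmt_13_general (n : ℕ) (f : EuclideanSpace ℝ (Fin n) → ℝ) (L α η : ℝ)
    (hα : 0 < α) (hη : 0 < η)
    (hdiff : Differentiable ℝ f)
    (hlip : ∀ x y : EuclideanSpace ℝ (Fin n), ‖gradient f x - gradient f y‖ ≤ L * ‖x - y‖)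
    (x : EuclideanSpace ℝ (Fin n)) (g : Fin n → ℝ) (hgdef : g = fun i => gradient f x i)
    (hg : ∀ i, |g i| ≤ η)
    (hdec : L * α / 2 * (∑ i, |gradient f x i|) < ‖gradient f x‖ ^ 2) :
    bernExp (fun i => |g i| / η) (fun s => f (smgdStep x α g s)) < f x := by
  subst hgdef
  have hgain : L * α ^ 2 / (2 * η) * ∑ i, |gradient f x i| - α / η * ‖gradient f x‖ ^ 2
      = α / η * (L * α / 2 * ∑ i, |gradient f x i| - ‖gradient f x‖ ^ 2) := by
    field_simp
  have hneg : α / η * (L * α / 2 * ∑ i, |gradient f x i| - ‖gradient f x‖ ^ 2) < 0 :=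
    mul_neg_of_pos_of_neg (div_pos hα hη) (sub_neg.2 hdec)
  linarith [bernExp_smgdStep_le hdiff (fun y => hlip y x) α hη hg]

theorem stmt_13 (n : ℕ) (f : EuclideanSpace ℝ (Fin n) → ℝ) (L α η : ℝ)
    (hL : 0 ≤ L) (hα : 0 < α) (hη : 0 < η)
    (hdiff : Differentiable ℝ f)
    (hlip : ∀ x y : EuclideanSpace ℝ (Fin n), ‖gradient f x - gradient f y‖ ≤ L * ‖x - y‖)
    (x : EuclideanSpace ℝ (Fin n)) (g : Fin n → ℝ) (hgdef : g = fun i => gradient f x i)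
    (hg : ∀ i, |g i| ≤ η)
    (hdec : L * α / 2 * (∑ i, |gradient f x i|) < ‖gradient f x‖ ^ 2) :
    bernExp (fun i => |g i| / η) (fun s => f (smgdStep x α g s)) < f x :=
  stmt_13_general n f L α η hα hη hdiff hlip x g hgdef hg hdec
end
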